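/- arXiv:1511.07470 — 3 statements merged into one kernel-verified Lean document; each statement's English description precedes it below -/
import Mathlib

section
/- If u and v are smooth real-valued functions of (x,t) satisfying the two-component short pulse system u_{xt} = u + (1/2)(u v u_x)_x and v_{xt} = v + (1/2)(u v v_x)_x, and w is a smooth positive function satisfying w^2 = 1 + u_x v_x, then w satisfies the conservation law w_t = ((1/2) u v w)_x. -/
/-- Partial derivative with respect to the first variable (x). -/
noncomputable def px (f : ℝ × ℝ → ℝ) (p : ℝ × ℝ) : ℝ :=
  deriv (fun x => f (x, p.2)) p.1

/-- Partial derivative with respect to the second variable (t). -/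
noncomputable def pt (f : ℝ × ℝ → ℝ) (p : ℝ × ℝ) : ℝ :=
  deriv (fun t => f (p.1, t)) p.2

lemma slice_x_diff {f : ℝ × ℝ → ℝ} (hf : ContDiff ℝ (⊤ : ℕ∞) f) (t : ℝ) :
    Differentiable ℝ fun x => f (x, t) :=
  (hf.differentiable (by simp)).comp (differentiable_id.prodMk (differentiable_const t))

lemma slice_t_diff {f : ℝ × ℝ → ℝ} (hf : ContDiff ℝ (⊤ : ℕ∞) f) (x : ℝ) :
    Differentiable ℝ fun t => f (x, t) :=
  (hf.differentiable (by simp)).comp ((differentiable_const x).prodMk differentiable_id)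

lemma px_eq_fderiv {f : ℝ × ℝ → ℝ} (hf : ContDiff ℝ (⊤ : ℕ∞) f) (p : ℝ × ℝ) :
    px f p = fderiv ℝ f p (1, 0) := by
  have h1 : HasDerivAt (fun x : ℝ => (x, p.2)) ((1 : ℝ), (0 : ℝ)) p.1 :=
    HasDerivAt.prodMk (hasDerivAt_id p.1) (hasDerivAt_const p.1 p.2)
  have h2 := ((hf.differentiable (by simp)) p).hasFDerivAt
  have h3 : HasDerivAt (fun x => f (x, p.2)) (fderiv ℝ f p (1, 0)) p.1 := by
    exact h2.comp_hasDerivAt p.1 h1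
  exact h3.deriv

lemma contDiff_px {f : ℝ × ℝ → ℝ} (hf : ContDiff ℝ (⊤ : ℕ∞) f) : ContDiff ℝ (⊤ : ℕ∞) (px f) := by
  have h : px f = fun p => fderiv ℝ f p (1, 0) := funext (px_eq_fderiv hf)
  rw [h]
  exact (hf.fderiv_right (by simp)).clm_apply contDiff_const

/-- If `u, v` are smooth solutions of the two-component short pulse system and `w` is a smooth
positive function with `w² = 1 + uₓ vₓ`, then `w_t = ((1/2) u v w)ₓ`. -/
theorem stmt0 (u v w : ℝ × ℝ → ℝ)
    (hu : ContDiff ℝ (⊤ : ℕ∞) u) (hv : ContDiff ℝ (⊤ : ℕ∞) v) (hw : ContDiff ℝ (⊤ : ℕ∞) w)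
    (hwpos : ∀ p, 0 < w p)
    (hw2 : ∀ p, (w p) ^ 2 = 1 + px u p * px v p)
    (hueq : ∀ p, pt (px u) p = u p + px (fun q => (1/2) * (u q * v q * px u q)) p)
    (hveq : ∀ p, pt (px v) p = v p + px (fun q => (1/2) * (u q * v q * px v q)) p) :
    ∀ p, pt w p = px (fun q => (1/2) * (u q * v q * w q)) p := by
  intro p
  have hux := contDiff_px hu
  have hvx := contDiff_px hv
  -- atoms in the x direction
  have hU : HasDerivAt (fun x => u (x, p.2)) (px u p) p.1 :=
    ((slice_x_diff hu p.2) p.1).hasDerivAt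
  have hV : HasDerivAt (fun x => v (x, p.2)) (px v p) p.1 :=
    ((slice_x_diff hv p.2) p.1).hasDerivAt
  have hW : HasDerivAt (fun x => w (x, p.2)) (px w p) p.1 :=
    ((slice_x_diff hw p.2) p.1).hasDerivAt
  have hUx : HasDerivAt (fun x => px u (x, p.2)) (px (px u) p) p.1 :=
    ((slice_x_diff hux p.2) p.1).hasDerivAt
  have hVx : HasDerivAt (fun x => px v (x, p.2)) (px (px v) p) p.1 :=
    ((slice_x_diff hvx p.2) p.1).hasDerivAt
  -- atoms in the t direction
  have hWt : HasDerivAt (fun t => w (p.1, t)) (pt w p) p.2 :=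
    ((slice_t_diff hw p.1) p.2).hasDerivAt
  have hUxt : HasDerivAt (fun t => px u (p.1, t)) (pt (px u) p) p.2 :=
    ((slice_t_diff hux p.1) p.2).hasDerivAt
  have hVxt : HasDerivAt (fun t => px v (p.1, t)) (pt (px v) p) p.2 :=
    ((slice_t_diff hvx p.1) p.2).hasDerivAt
  -- expand the right-hand sides of the PDEs
  have e1 : px (fun q => (1/2) * (u q * v q * px u q)) p
      = 1/2 * ((px u p * v p + u p * px v p) * px u p + u p * v p * px (px u) p) :=
    (((hU.mul hV).mul hUx).const_mul (1/2 : ℝ)).deriv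
  have e2 : px (fun q => (1/2) * (u q * v q * px v q)) p
      = 1/2 * ((px u p * v p + u p * px v p) * px v p + u p * v p * px (px v) p) :=
    (((hU.mul hV).mul hVx).const_mul (1/2 : ℝ)).deriv
  have eW : px (fun q => (1/2) * (u q * v q * w q)) p
      = 1/2 * ((px u p * v p + u p * px v p) * w p + u p * v p * px w p) :=
    (((hU.mul hV).mul hW).const_mul (1/2 : ℝ)).deriv
  -- differentiate w² = 1 + uₓ vₓ in t
  have hfunt : (fun t => w (p.1, t) ^ 2) = fun t => 1 + px u (p.1, t) * px v (p.1, t) := by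
    funext t; exact hw2 (p.1, t)
  have hLt : deriv (fun t => w (p.1, t) ^ 2) p.2 = 2 * w p * pt w p := by
    have := (hWt.pow 2).deriv; simp at this; exact this
  have hRt : deriv (fun t => 1 + px u (p.1, t) * px v (p.1, t)) p.2
      = pt (px u) p * px v p + px u p * pt (px v) p :=
    ((hUxt.mul hVxt).const_add 1).deriv
  have hB : 2 * w p * pt w p = pt (px u) p * px v p + px u p * pt (px v) p := by
    rw [← hLt, hfunt, hRt]
  -- differentiate w² = 1 + uₓ vₓ in x
  have hfunx : (fun x => w (x, p.2) ^ 2) = fun x => 1 + px u (x, p.2) * px v (x, p.2) := by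
    funext x; exact hw2 (x, p.2)
  have hLx : deriv (fun x => w (x, p.2) ^ 2) p.1 = 2 * w p * px w p := by
    have := (hW.pow 2).deriv; simp at this; exact this
  have hRx : deriv (fun x => 1 + px u (x, p.2) * px v (x, p.2)) p.1
      = px (px u) p * px v p + px u p * px (px v) p :=
    ((hUx.mul hVx).const_add 1).deriv
  have hC : 2 * w p * px w p = px (px u) p * px v p + px u p * px (px v) p := by
    rw [← hLx, hfunx, hRx]
  -- put it together
  have h2 := hw2 p
  have hu' := hueq p; rw [e1] at hu'
  have hv' := hveq p; rw [e2] at hv'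
  rw [eW]
  refine mul_left_cancel₀ (a := 2 * w p) (mul_ne_zero two_ne_zero (hwpos p).ne') ?_
  linear_combination hB + px v p * hu' + px u p * hv'
    - (px u p * v p + u p * px v p) * h2 - (u p * v p / 2) * hC
end

section
/- The functions x(y,τ) = α y - (1/λ₁) tanh(ζ₁ + ln|μ₁|), u(y,τ) = v(y,τ) = -(1/λ₁) sech(ζ₁ + ln|μ₁|), where ζ₁ = 2(α λ₁ y + τ/(4λ₁)), satisfy the system x_{yτ} = -(1/2)(uv)_y, u_{yτ} = x_y u, v_{yτ} = x_y v. -/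
/-- Partial derivative with respect to the first variable (y). -/
noncomputable def py (f : ℝ × ℝ → ℝ) (p : ℝ × ℝ) : ℝ :=
  deriv (fun y => f (y, p.2)) p.1

/-- Partial derivative with respect to the second variable (τ). -/
noncomputable def ptau (f : ℝ × ℝ → ℝ) (p : ℝ × ℝ) : ℝ :=
  deriv (fun τ => f (p.1, τ)) p.2

/-!
With `θ = ζ₁ + log |μ₁| = a y + b τ + c`, where `a = 2 α λ₁` and `b = 1 / (2 λ₁)`
(so `a b = α` and `λ₁⁻¹ = 2 b`), the profile is `x = a b y - 2 b tanh θ` and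
`u = v = -2 b sech θ`. A `y`- or `τ`-derivative of a function of `θ` is `a` or `b` times its
`θ`-derivative, so both equations become identities in `sinh θ` and `cosh θ`: the first holds
identically, the second reduces to `cosh² θ - sinh² θ = 1`.
-/

open Real

theorem py_eq_of_hasDerivAt {f f' : ℝ × ℝ → ℝ}
    (h : ∀ p : ℝ × ℝ, HasDerivAt (fun y => f (y, p.2)) (f' p) p.1) : py f = f' :=
  funext fun p => (h p).deriv

theorem ptau_eq_of_hasDerivAt {f f' : ℝ × ℝ → ℝ}
    (h : ∀ p : ℝ × ℝ, HasDerivAt (fun τ => f (p.1, τ)) (f' p) p.2) : ptau f = f' :=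
  funext fun p => (h p).deriv

namespace Real

theorem hasDerivAt_tanh (t : ℝ) : HasDerivAt tanh (cosh t ^ 2)⁻¹ t := by
  rw [funext tanh_eq_sinh_div_cosh]
  refine ((hasDerivAt_sinh t).div (hasDerivAt_cosh t) (cosh_pos t).ne').congr_deriv ?_
  field_simp
  linear_combination cosh_sq_sub_sinh_sq t

theorem hasDerivAt_inv_cosh (t : ℝ) :
    HasDerivAt (fun s => (cosh s)⁻¹) (-sinh t / cosh t ^ 2) t :=
  (hasDerivAt_cosh t).inv (cosh_pos t).ne'

theorem hasDerivAt_inv_cosh_sq (t : ℝ) :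
    HasDerivAt (fun s => (cosh s ^ 2)⁻¹) (-2 * sinh t / cosh t ^ 3) t := by
  refine (((hasDerivAt_cosh t).pow 2).inv (pow_ne_zero 2 (cosh_pos t).ne')).congr_deriv ?_
  simp only [Pi.pow_apply]
  field_simp
  ring

theorem hasDerivAt_sinh_div_cosh_sq (t : ℝ) :
    HasDerivAt (fun s => sinh s / cosh s ^ 2)
      ((cosh t ^ 2 - 2 * sinh t ^ 2) / cosh t ^ 3) t := by
  refine ((hasDerivAt_sinh t).div ((hasDerivAt_cosh t).pow 2)
    (pow_ne_zero 2 (cosh_pos t).ne')).congr_deriv ?_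
  simp only [Pi.pow_apply]
  field_simp
  ring

end Real

def phase (a b c : ℝ) (q : ℝ × ℝ) : ℝ := a * q.1 + b * q.2 + c

theorem hasDerivAt_phase_fst (a b c : ℝ) (p : ℝ × ℝ) :
    HasDerivAt (fun y => phase a b c (y, p.2)) a p.1 := by
  simpa [phase] using ((hasDerivAt_id p.1).const_mul a).add_const (b * p.2 + c)

theorem hasDerivAt_phase_snd (a b c : ℝ) (p : ℝ × ℝ) :
    HasDerivAt (fun τ => phase a b c (p.1, τ)) b p.2 := by
  simpa [phase, add_right_comm] using ((hasDerivAt_id p.2).const_mul b).add_const (a * p.1 + c)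

theorem py_comp_phase {a b c : ℝ} {g g' : ℝ → ℝ} (hg : ∀ t, HasDerivAt g (g' t) t) :
    py (fun q => g (phase a b c q)) = fun q => a * g' (phase a b c q) :=
  py_eq_of_hasDerivAt fun p => by
    have h := (hg _).comp p.1 (hasDerivAt_phase_fst a b c p)
    rwa [Prod.mk.eta, mul_comm] at h

theorem ptau_comp_phase {a b c : ℝ} {g g' : ℝ → ℝ} (hg : ∀ t, HasDerivAt g (g' t) t) :
    ptau (fun q => g (phase a b c q)) = fun q => b * g' (phase a b c q) :=
  ptau_eq_of_hasDerivAt fun p => by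
    have h := (hg _).comp p.2 (hasDerivAt_phase_snd a b c p)
    rwa [Prod.mk.eta, mul_comm] at h

noncomputable def solitonX (a b c : ℝ) (q : ℝ × ℝ) : ℝ :=
  a * b * q.1 - 2 * b * tanh (phase a b c q)

noncomputable def solitonU (a b c : ℝ) (q : ℝ × ℝ) : ℝ :=
  -2 * b / cosh (phase a b c q)

section Soliton

variable (a b c : ℝ)

theorem py_solitonX :
    py (solitonX a b c) = fun q => a * b - 2 * a * b * (cosh (phase a b c q) ^ 2)⁻¹ :=
  py_eq_of_hasDerivAt fun p => by
    have h := ((hasDerivAt_id p.1).const_mul (a * b)).sub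
      (((hasDerivAt_tanh _).comp p.1 (hasDerivAt_phase_fst a b c p)).const_mul (2 * b))
    rw [Prod.mk.eta] at h
    exact h.congr_deriv (by ring)

theorem ptau_py_solitonX :
    ptau (py (solitonX a b c)) =
      fun q => 4 * a * b ^ 2 * sinh (phase a b c q) / cosh (phase a b c q) ^ 3 := by
  rw [py_solitonX, ptau_comp_phase fun t =>
    ((hasDerivAt_inv_cosh_sq t).const_mul (2 * a * b)).const_sub (a * b)]
  funext q
  ring

theorem py_solitonU_mul_self :
    py (fun q => solitonU a b c q * solitonU a b c q) =
      fun q => -8 * a * b ^ 2 * sinh (phase a b c q) / cosh (phase a b c q) ^ 3 := by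
  have hsq : (fun q => solitonU a b c q * solitonU a b c q) =
      fun q => 4 * b ^ 2 * (cosh (phase a b c q) ^ 2)⁻¹ := by
    funext q
    simp only [solitonU]
    ring
  rw [hsq, py_comp_phase fun t => (hasDerivAt_inv_cosh_sq t).const_mul (4 * b ^ 2)]
  funext q
  ring

theorem py_solitonU :
    py (solitonU a b c) =
      fun q => 2 * a * b * (sinh (phase a b c q) / cosh (phase a b c q) ^ 2) := by
  have hinv : solitonU a b c = fun q => -2 * b * (cosh (phase a b c q))⁻¹ := by
    funext q
    simp only [solitonU, div_eq_mul_inv]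
  rw [hinv, py_comp_phase fun t => (hasDerivAt_inv_cosh t).const_mul (-2 * b)]
  funext q
  ring

theorem ptau_py_solitonU :
    ptau (py (solitonU a b c)) = fun q => 2 * a * b ^ 2 *
      ((cosh (phase a b c q) ^ 2 - 2 * sinh (phase a b c q) ^ 2) / cosh (phase a b c q) ^ 3) := by
  rw [py_solitonU, ptau_comp_phase fun t =>
    (hasDerivAt_sinh_div_cosh_sq t).const_mul (2 * a * b)]
  funext q
  ring

theorem ptau_py_solitonX_eq (q : ℝ × ℝ) :
    ptau (py (solitonX a b c)) q =
      -(1 / 2) * py (fun s => solitonU a b c s * solitonU a b c s) q := by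
  rw [ptau_py_solitonX, py_solitonU_mul_self]
  ring

theorem ptau_py_solitonU_eq (q : ℝ × ℝ) :
    ptau (py (solitonU a b c)) q = py (solitonX a b c) q * solitonU a b c q := by
  rw [ptau_py_solitonU, py_solitonX]
  simp only [solitonU]
  have hcosh := (cosh_pos (phase a b c q)).ne'
  field_simp
  linear_combination 2 * a * b ^ 2 * cosh_sq_sub_sinh_sq (phase a b c q)

end Soliton

theorem stmt6_general (α lam1 μ₁ : ℝ) (hlam : lam1 ≠ 0) :
    let ζ : ℝ × ℝ → ℝ := fun p => 2 * (α * lam1 * p.1 + p.2 / (4 * lam1))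
    let x : ℝ × ℝ → ℝ := fun p => α * p.1 - lam1⁻¹ * Real.tanh (ζ p + Real.log |μ₁|)
    let u : ℝ × ℝ → ℝ := fun p => -lam1⁻¹ / Real.cosh (ζ p + Real.log |μ₁|)
    let v : ℝ × ℝ → ℝ := fun p => -lam1⁻¹ / Real.cosh (ζ p + Real.log |μ₁|)
    (∀ p, ptau (py x) p = -(1/2) * py (fun s => u s * v s) p) ∧
    (∀ p, ptau (py u) p = py x p * u p) ∧
    (∀ p, ptau (py v) p = py x p * v p) := by
  intro ζ x u v
  set a := 2 * α * lam1
  set b := (2 * lam1)⁻¹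
  have hphase (q : ℝ × ℝ) : ζ q + log |μ₁| = phase a b (log |μ₁|) q := by
    simp only [ζ, phase, a, b]
    ring
  have hx : x = solitonX a b (log |μ₁|) := by
    funext q
    simp only [x, solitonX, hphase, a, b]
    field_simp
  have hu : u = solitonU a b (log |μ₁|) := by
    funext q
    simp only [u, solitonU, hphase, b]
    ring
  rw [hx, show v = u from rfl, hu]
  exact ⟨ptau_py_solitonX_eq a b _, ptau_py_solitonU_eq a b _, ptau_py_solitonU_eq a b _⟩

/-- The one-loop soliton profile satisfies the transformed system
`x_{yτ} = -(1/2)(uv)_y`, `u_{yτ} = x_y u`, `v_{yτ} = x_y v`. -/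
theorem stmt6 (α lam1 μ₁ : ℝ) (hlam : lam1 ≠ 0) (hμ : μ₁ ≠ 0) :
    let ζ : ℝ × ℝ → ℝ := fun p => 2 * (α * lam1 * p.1 + p.2 / (4 * lam1))
    let x : ℝ × ℝ → ℝ := fun p => α * p.1 - lam1⁻¹ * Real.tanh (ζ p + Real.log |μ₁|)
    let u : ℝ × ℝ → ℝ := fun p => -lam1⁻¹ / Real.cosh (ζ p + Real.log |μ₁|)
    let v : ℝ × ℝ → ℝ := fun p => -lam1⁻¹ / Real.cosh (ζ p + Real.log |μ₁|)
    (∀ p, ptau (py x) p = -(1/2) * py (fun s => u s * v s) p) ∧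
    (∀ p, ptau (py u) p = py x p * u p) ∧
    (∀ p, ptau (py v) p = py x p * v p) :=
  stmt6_general α lam1 μ₁ hlam
end

section
/- For 0 < δ < 1, a > 0, and |t| < a(1-δ), define δ(τ) = (1/2)(1 + δ - |τ|/a) for 0 ≤ τ ≤ |t|. Then δ < δ(τ) < 1 for all 0 ≤ τ ≤ |t|, and the integral estimate ∫₀^{|t|} 1/((δ(τ) - δ) sqrt(1 - τ/(a(1-δ(τ))))) dτ ≤ (8a/(1-δ)) sqrt(a(1-δ)/(a(1-δ) - |t|)) holds. -/
/-!
With `b = a(1-δ)` one has `δ(τ) - δ = (b-τ)/(2a)` and `a(1-δ(τ)) = (b+τ)/2`, so the integrand is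
`2a √(b+τ) (b-τ)^{-3/2}`. Bounding `√(b+τ) ≤ √(2b)` leaves an explicit integral with primitive
`2 (b-τ)^{-1/2}`, and `4√2 ≤ 8 ≤ 8/(1-δ)` absorbs the constants.
-/

open Real intervalIntegral

section SqrtSub

variable {b : ℝ}

theorem hasDerivAt_two_div_sqrt_sub {x : ℝ} (hx : x < b) :
    HasDerivAt (fun τ => 2 / √(b - τ)) (1 / ((b - x) * √(b - x))) x := by
  have hbx : 0 < b - x := sub_pos.mpr hx
  have hs : 0 < √(b - x) := sqrt_pos.mpr hbx
  have hsub : HasDerivAt (fun τ : ℝ => b - τ) (-1) x := by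
    simpa using (hasDerivAt_id x).const_sub b
  refine ((hasDerivAt_const x (2 : ℝ)).div (hsub.sqrt hbx.ne')
    hs.ne').congr_deriv ?_
  rw [sq_sqrt hbx.le]
  field_simp
  ring

theorem continuousOn_one_div_mul_sqrt_sub {s : Set ℝ} (hs : ∀ x ∈ s, x < b) :
    ContinuousOn (fun x => 1 / ((b - x) * √(b - x))) s := by
  refine continuousOn_const.div (by fun_prop) fun x hx => ?_
  have hbx : 0 < b - x := sub_pos.mpr (hs x hx)
  exact (mul_pos hbx (sqrt_pos.mpr hbx)).ne'

theorem integral_one_div_mul_sqrt_sub {u v : ℝ} (hu : u < b) (hv : v < b) :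
    ∫ x in u..v, 1 / ((b - x) * √(b - x)) = 2 / √(b - v) - 2 / √(b - u) := by
  have hlt : ∀ x ∈ Set.uIcc u v, x < b := fun x hx =>
    hx.2.trans_lt (max_lt hu hv)
  exact integral_eq_sub_of_hasDerivAt (fun x hx => hasDerivAt_two_div_sqrt_sub (hlt x hx))
    (continuousOn_one_div_mul_sqrt_sub hlt).intervalIntegrable

theorem integral_mul_sqrt_add_mul_one_div_mul_sqrt_sub_le {c T : ℝ} (hc : 0 ≤ c) (hT0 : 0 ≤ T)
    (hT : T < b) :
    ∫ τ in (0)..T, c * √(b + τ) * (1 / ((b - τ) * √(b - τ))) ≤ 4 * c * √(b / (b - T)) := by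
  have hb : 0 < b := hT0.trans_lt hT
  have hlt : ∀ τ ∈ Set.Icc 0 T, τ < b := fun τ hτ => hτ.2.trans_lt hT
  have hsqrt : √(2 * b) ≤ 2 * √b := by
    rw [sqrt_mul zero_le_two]
    gcongr
    rw [sqrt_le_left zero_le_two]
    norm_num
  calc _ ≤ ∫ τ in (0)..T, c * √(2 * b) * (1 / ((b - τ) * √(b - τ))) := by
        refine integral_mono_on hT0 ?_ ?_ fun τ hτ => ?_
        · exact (ContinuousOn.mul (by fun_prop) (continuousOn_one_div_mul_sqrt_sub hlt)
            ).intervalIntegrable_of_Icc hT0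
        · exact (continuousOn_const.mul (continuousOn_one_div_mul_sqrt_sub hlt)
            ).intervalIntegrable_of_Icc hT0
        · have := hlt τ hτ
          gcongr
          linarith
    _ = c * √(2 * b) * (2 / √(b - T) - 2 / √b) := by
        rw [integral_const_mul, integral_one_div_mul_sqrt_sub hb hT, sub_zero]
    _ ≤ c * √(2 * b) * (2 / √(b - T)) := by
        gcongr
        exact sub_le_self _ (by positivity)
    _ ≤ c * (2 * √b) * (2 / √(b - T)) := by gcongr
    _ = 4 * c * √(b / (b - T)) := by
        rw [sqrt_div hb.le]
        ring

end SqrtSub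

section Weight

variable {a δ τ : ℝ}

theorem half_one_add_sub_div_sub (ha : a ≠ 0) :
    1 / 2 * (1 + δ - τ / a) - δ = (a * (1 - δ) - τ) / (2 * a) := by
  field_simp
  ring

theorem mul_one_sub_half_one_add_sub_div (ha : a ≠ 0) :
    a * (1 - 1 / 2 * (1 + δ - τ / a)) = (a * (1 - δ) + τ) / 2 := by
  field_simp
  ring

theorem ovsyannikov_weight_mem (ha : 0 < a) (hτ0 : 0 ≤ τ) (hτ : τ < a * (1 - δ)) :
    1 / 2 * (1 + δ - τ / a) ∈ Set.Ioo δ 1 := by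
  have hsub := half_one_add_sub_div_sub (δ := δ) (τ := τ) ha.ne'
  have hone := mul_one_sub_half_one_add_sub_div (δ := δ) (τ := τ) ha.ne'
  constructor
  · have : 0 < (a * (1 - δ) - τ) / (2 * a) := div_pos (by linarith) (by positivity)
    linarith
  · have : 0 < a * (1 - 1 / 2 * (1 + δ - τ / a)) := by rw [hone]; linarith
    linarith [pos_of_mul_pos_right this ha.le]

theorem ovsyannikov_integrand_eq (ha : a ≠ 0) (hτ0 : 0 ≤ τ) (hτ : τ < a * (1 - δ)) :
    1 / ((1 / 2 * (1 + δ - τ / a) - δ) * √(1 - τ / (a * (1 - 1 / 2 * (1 + δ - τ / a))))) =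
      2 * a * √(a * (1 - δ) + τ) * (1 / ((a * (1 - δ) - τ) * √(a * (1 - δ) - τ))) := by
  have hbm : 0 < a * (1 - δ) - τ := by linarith
  have hbp : 0 < a * (1 - δ) + τ := by linarith
  have hratio : 1 - τ / ((a * (1 - δ) + τ) / 2) =
      (a * (1 - δ) - τ) / (a * (1 - δ) + τ) := by
    field_simp
    ring
  rw [half_one_add_sub_div_sub ha, mul_one_sub_half_one_add_sub_div ha, hratio,
    sqrt_div hbm.le]
  have := (sqrt_pos.mpr hbp).ne'
  have := (sqrt_pos.mpr hbm).ne'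
  field_simp

end Weight

theorem stmt16_general (a δ : ℝ) (ha : 0 < a) (hδ0 : 0 < δ)
    (t : ℂ) (ht : ‖t‖ < a * (1 - δ)) :
    (∀ τ : ℝ, 0 ≤ τ → τ ≤ ‖t‖ →
      δ < (1/2) * (1 + δ - τ / a) ∧ (1/2) * (1 + δ - τ / a) < 1) ∧
    (∫ τ in (0 : ℝ)..(‖t‖),
        1 / (((1/2) * (1 + δ - τ / a) - δ) *
          Real.sqrt (1 - τ / (a * (1 - (1/2) * (1 + δ - τ / a))))) ≤
      8 * a / (1 - δ) *
        Real.sqrt (a * (1 - δ) / (a * (1 - δ) - ‖t‖))) := by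
  have hT0 : 0 ≤ ‖t‖ := norm_nonneg t
  have hδ1 : 0 < 1 - δ := pos_of_mul_pos_right (hT0.trans_lt ht) ha.le
  refine ⟨fun τ hτ0 hτT => ovsyannikov_weight_mem ha hτ0 (hτT.trans_lt ht), ?_⟩
  calc _ = ∫ τ in (0)..‖t‖,
        2 * a * √(a * (1 - δ) + τ) * (1 / ((a * (1 - δ) - τ) * √(a * (1 - δ) - τ))) :=
        integral_congr fun τ hτ => by
          rw [Set.uIcc_of_le hT0] at hτ
          exact ovsyannikov_integrand_eq ha.ne' hτ.1 (hτ.2.trans_lt ht)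
    _ ≤ 4 * (2 * a) * √(a * (1 - δ) / (a * (1 - δ) - ‖t‖)) :=
        integral_mul_sqrt_add_mul_one_div_mul_sqrt_sub_le (by positivity) hT0 ht
    _ ≤ 8 * a / (1 - δ) * √(a * (1 - δ) / (a * (1 - δ) - ‖t‖)) := by
        rw [← mul_assoc, show (4 : ℝ) * 2 = 8 by norm_num]
        gcongr
        exact le_div_self (by positivity) hδ1 (by linarith)

/-- Scalar core of the Ovsyannikov integral estimate: with `δ(τ) = (1/2)(1 + δ - τ/a)`, one has
`δ < δ(τ) < 1` on `[0, |t|]` and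
`∫₀^{|t|} dτ / ((δ(τ)-δ)√(1 - τ/(a(1-δ(τ))))) ≤ (8a/(1-δ)) √(a(1-δ)/(a(1-δ)-|t|))`. -/
theorem stmt16 (a δ : ℝ) (ha : 0 < a) (hδ0 : 0 < δ) (hδ1 : δ < 1)
    (t : ℂ) (ht : ‖t‖ < a * (1 - δ)) :
    (∀ τ : ℝ, 0 ≤ τ → τ ≤ ‖t‖ →
      δ < (1/2) * (1 + δ - τ / a) ∧ (1/2) * (1 + δ - τ / a) < 1) ∧
    (∫ τ in (0 : ℝ)..(‖t‖),
        1 / (((1/2) * (1 + δ - τ / a) - δ) *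
          Real.sqrt (1 - τ / (a * (1 - (1/2) * (1 + δ - τ / a))))) ≤
      8 * a / (1 - δ) *
        Real.sqrt (a * (1 - δ) / (a * (1 - δ) - ‖t‖))) :=
  stmt16_general a δ ha hδ0 t ht
end
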